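/- arXiv:2502.00108 — 3 statements merged into one kernel-verified Lean document; each statement's English description precedes it below -/
import Mathlib

section
/- Let β ≥ 1, let T ≥ 2 be a real number, let κ_1 > 0 satisfy log₂(T) ≥ κ_1^{−1/(2β)}, let m be a natural number, and set ε := log₂³(T) · 2^{−m/(β+1)}. Assume ε ≤ 1 and κ_1·ε^β ≤ 1. Let n be a natural number with n ≥ 2^{1 + m·β/(β+1)}, and let X_1,...,X_n be i.i.d. random variables with values in [0,1] such that P(X_1 > 1−ε) ≥ κ_1·ε^β. Then P( max_{1≤i≤n} X_i ≤ 1−ε ) ≤ 1/T². -/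
open MeasureTheory ProbabilityTheory

/-- Best-initial-arm lemma (quantitative form): with `ε = log₂³(T)·2^{−m/(β+1)}` and
`n ≥ 2^{1+mβ/(β+1)}` i.i.d. arms in `[0,1]` satisfying the reservoir lower tail bound
`P(X > 1−ε) ≥ κ₁·ε^β`, the probability that all arms have initial value at most `1−ε`
is at most `1/T²`. -/
theorem best_initial_arm
    {Ω : Type*} [MeasurableSpace Ω] (μ : Measure Ω) [IsProbabilityMeasure μ]
    (β T κ₁ : ℝ) (m : ℕ) (ε : ℝ)
    (hβ : 1 ≤ β) (hT : 2 ≤ T) (hκ₁ : 0 < κ₁)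
    (hlogT : κ₁ ^ (-(1 / (2 * β))) ≤ Real.logb 2 T)
    (hε : ε = (Real.logb 2 T) ^ 3 * (2 : ℝ) ^ (-((m : ℝ) / (β + 1))))
    (hε1 : ε ≤ 1) (hκε : κ₁ * ε ^ β ≤ 1)
    (n : ℕ) (hn : (2 : ℝ) ^ (1 + (m : ℝ) * β / (β + 1)) ≤ (n : ℝ))
    (X : Fin n → Ω → ℝ)
    (hmeas : ∀ i, Measurable (X i))
    (hindep : iIndepFun X μ)
    (hident : ∀ i j, IdentDistrib (X i) (X j) μ μ)
    (hrange : ∀ i ω, X i ω ∈ Set.Icc (0 : ℝ) 1)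
    (htail : ∀ i, ENNReal.ofReal (κ₁ * ε ^ β) ≤ μ {ω | 1 - ε < X i ω}) :
    μ {ω | ∀ i, X i ω ≤ 1 - ε} ≤ ENNReal.ofReal (1 / T ^ 2) := by
  set L := Real.logb 2 T with hL
  have hT0 : (0 : ℝ) < T := lt_of_lt_of_le two_pos hT
  have hβ0 : (0 : ℝ) < β := lt_of_lt_of_le one_pos hβ
  have hβ1 : (0 : ℝ) < β + 1 := by linarith
  have hL1 : (1 : ℝ) ≤ L := by
    rw [hL, show (1:ℝ) = Real.logb 2 2 by simp]
    exact Real.logb_le_logb_of_le (by norm_num : (1:ℝ) < 2) (by norm_num) hT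
  have hL0 : (0 : ℝ) < L := lt_of_lt_of_le one_pos hL1
  set p := κ₁ * ε ^ β with hp
  have hε0 : 0 < ε := by
    rw [hε]; positivity
  have hp0 : 0 ≤ p := by
    have := Real.rpow_nonneg hε0.le β
    positivity
  have hp1 : p ≤ 1 := hκε
  -- key arithmetic inequality
  have hεβ : ε ^ β = L ^ (3 * β) * (2 : ℝ) ^ (-((m : ℝ) * β / (β + 1))) := by
    rw [hε, Real.mul_rpow (by positivity) (by positivity)]
    congr 1
    · rw [← Real.rpow_natCast L 3, ← Real.rpow_mul hL0.le]; norm_num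
    · rw [← Real.rpow_mul (by norm_num : (0:ℝ) ≤ 2)]
      congr 1; ring
  have h2d : (2 : ℝ) ^ (1 + (m : ℝ) * β / (β + 1)) * (2:ℝ) ^ (-((m : ℝ) * β / (β + 1))) = 2 := by
    rw [← Real.rpow_add two_pos]
    norm_num
  have hone : (1 : ℝ) ≤ κ₁ * L ^ (3 * β - 1) := by
    rcases le_or_gt 1 κ₁ with h1 | h1
    · have : (1:ℝ) ≤ L ^ (3 * β - 1) := by
        calc (1:ℝ) = (1:ℝ) ^ (3 * β - 1) := (Real.one_rpow _).symm
        _ ≤ L ^ (3 * β - 1) := Real.rpow_le_rpow zero_le_one hL1 (by linarith)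
      nlinarith
    · have hstep : (κ₁ ^ (-(1 / (2 * β)))) ^ (3 * β - 1) ≤ L ^ (3 * β - 1) :=
        Real.rpow_le_rpow (Real.rpow_nonneg hκ₁.le _) hlogT (by linarith)
      rw [← Real.rpow_mul hκ₁.le] at hstep
      have hκpow : (1:ℝ) ≤ κ₁ ^ (1 + -(1 / (2 * β)) * (3 * β - 1)) := by
        apply Real.one_le_rpow_of_pos_of_le_one_of_nonpos hκ₁ h1.le
        have hb : (0:ℝ) < 2 * β := by linarith
        rw [show 1 + -(1 / (2 * β)) * (3 * β - 1) = (1 - β) / (2 * β) by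
          field_simp; ring]
        exact div_nonpos_of_nonpos_of_nonneg (by linarith) hb.le
      rw [Real.rpow_add hκ₁, Real.rpow_one] at hκpow
      calc (1:ℝ) ≤ κ₁ * κ₁ ^ (-(1 / (2 * β)) * (3 * β - 1)) := hκpow
      _ ≤ κ₁ * L ^ (3 * β - 1) := by
          exact mul_le_mul_of_nonneg_left hstep hκ₁.le
  have hlogTL : Real.log T ≤ L := by
    have hlog2 : Real.log 2 ≤ 1 := by
      have := Real.log_le_sub_one_of_pos (by norm_num : (0:ℝ) < 2); linarith
    have hlog2pos : 0 < Real.log 2 := Real.log_pos (by norm_num)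
    have : Real.log T = L * Real.log 2 := by
      rw [hL, Real.logb, div_mul_cancel₀ _ hlog2pos.ne']
    rw [this]
    nlinarith [Real.log_nonneg (by linarith : (1:ℝ) ≤ T)]
  have hLp : L ≤ κ₁ * L ^ (3 * β) := by
    have : L ^ (3 * β) = L ^ (3 * β - 1) * L := by
      rw [← Real.rpow_add_one hL0.ne' (3 * β - 1)]; ring_nf
    rw [this]
    nlinarith
  have hkey : 2 * Real.log T ≤ (n : ℝ) * p := by
    have h1 : 2 * (κ₁ * L ^ (3 * β)) ≤ (n : ℝ) * p := by
      have hppos : 0 ≤ κ₁ * L ^ (3 * β) * (2:ℝ) ^ (-((m : ℝ) * β / (β + 1))) := by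
        positivity
      calc 2 * (κ₁ * L ^ (3 * β))
          = (2 : ℝ) ^ (1 + (m : ℝ) * β / (β + 1)) *
            (κ₁ * (L ^ (3 * β) * (2:ℝ) ^ (-((m : ℝ) * β / (β + 1))))) := by
            rw [show (2 : ℝ) ^ (1 + (m : ℝ) * β / (β + 1)) *
              (κ₁ * (L ^ (3 * β) * (2:ℝ) ^ (-((m : ℝ) * β / (β + 1))))) =
              ((2 : ℝ) ^ (1 + (m : ℝ) * β / (β + 1)) * (2:ℝ) ^ (-((m : ℝ) * β / (β + 1)))) *
              (κ₁ * L ^ (3 * β)) by ring, h2d]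
        _ ≤ (n : ℝ) * (κ₁ * (L ^ (3 * β) * (2:ℝ) ^ (-((m : ℝ) * β / (β + 1))))) := by
            apply mul_le_mul_of_nonneg_right hn
            positivity
        _ = (n : ℝ) * p := by rw [hp, hεβ]
    nlinarith
  -- probabilistic part
  have hsets : {ω | ∀ i, X i ω ≤ 1 - ε} = ⋂ i, X i ⁻¹' Set.Iic (1 - ε) := by
    ext ω; simp [Set.mem_iInter]
  have hprod : μ (⋂ i, X i ⁻¹' Set.Iic (1 - ε)) = ∏ i, μ (X i ⁻¹' Set.Iic (1 - ε)) :=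
    hindep.meas_iInter (fun i => ⟨Set.Iic (1 - ε), measurableSet_Iic, rfl⟩)
  have hbound : ∀ i, μ (X i ⁻¹' Set.Iic (1 - ε)) ≤ ENNReal.ofReal (1 - p) := by
    intro i
    have hms : MeasurableSet (X i ⁻¹' Set.Iic (1 - ε)) := (hmeas i) measurableSet_Iic
    have hcompl : (X i ⁻¹' Set.Iic (1 - ε))ᶜ = {ω | 1 - ε < X i ω} := by
      ext ω; simp [not_le]
    have hsum : μ (X i ⁻¹' Set.Iic (1 - ε)) + μ ((X i ⁻¹' Set.Iic (1 - ε))ᶜ) = 1 := by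
      rw [measure_add_measure_compl hms, measure_univ]
    have h1 : μ (X i ⁻¹' Set.Iic (1 - ε)) ≤ 1 - μ ((X i ⁻¹' Set.Iic (1 - ε))ᶜ) :=
      ENNReal.le_sub_of_add_le_right (measure_ne_top μ _) hsum.le
    have h2 : ENNReal.ofReal p ≤ μ ((X i ⁻¹' Set.Iic (1 - ε))ᶜ) := by
      rw [hcompl]; exact htail i
    calc μ (X i ⁻¹' Set.Iic (1 - ε)) ≤ 1 - μ ((X i ⁻¹' Set.Iic (1 - ε))ᶜ) := h1
      _ ≤ 1 - ENNReal.ofReal p := tsub_le_tsub_left h2 1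
      _ = ENNReal.ofReal (1 - p) := by
          rw [ENNReal.ofReal_sub 1 hp0, ENNReal.ofReal_one]
  have hreal : (1 - p) ^ n ≤ 1 / T ^ 2 := by
    have h1p : 0 ≤ 1 - p := by linarith
    have hexp : 1 - p ≤ Real.exp (-p) := by
      have := Real.add_one_le_exp (-p); linarith
    calc (1 - p) ^ n ≤ Real.exp (-p) ^ n := pow_le_pow_left₀ h1p hexp n
      _ = Real.exp ((n : ℝ) * (-p)) := by rw [← Real.exp_nat_mul]
      _ ≤ Real.exp (-(2 * Real.log T)) := by
          apply Real.exp_le_exp.mpr; nlinarith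
      _ = 1 / T ^ 2 := by
          rw [show -(2 * Real.log T) = Real.log (1 / T ^ 2) by
            rw [one_div, Real.log_inv, Real.log_pow]; push_cast; ring]
          exact Real.exp_log (by positivity)
  calc μ {ω | ∀ i, X i ω ≤ 1 - ε} = ∏ i, μ (X i ⁻¹' Set.Iic (1 - ε)) := by
        rw [hsets, hprod]
    _ ≤ ∏ _i : Fin n, ENNReal.ofReal (1 - p) := Finset.prod_le_prod' (fun i _ => hbound i)
    _ = ENNReal.ofReal (1 - p) ^ n := by simp
    _ = ENNReal.ofReal ((1 - p) ^ n) := by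
        rw [ENNReal.ofReal_pow (by linarith)]
    _ ≤ ENNReal.ofReal (1 / T ^ 2) := ENNReal.ofReal_le_ofReal hreal
end

section
/- Let β ≥ 1, let T ≥ 2 be a real number, and write L := log₂(T) ≥ 1. Let d_1,...,d_n be positive reals with Σ_{ℓ=1}^n d_ℓ ≤ T, and let V ≥ 0 be a real number with Σ_{ℓ=1}^{n−1} L³·d_ℓ^{−1/(β+1)} ≤ V. Then Σ_{ℓ=1}^n d_ℓ^{β/(β+1)}·L³ ≤ min( n^{1/(β+1)}·T^{β/(β+1)}·L³ , V^{1/(β+2)}·T^{(β+1)/(β+2)}·L³ + T^{β/(β+1)}·L³ ). -/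
/-!
Both bounds are instances of Hölder's inequality `∑ uᵢ^a vᵢ^(1-a) ≤ (∑ uᵢ)^a (∑ vᵢ)^(1-a)`,
taken with `vᵢ = dᵢ`. With `uᵢ = 1` and `a = 1/(β+1)` it is Jensen's inequality for the
concave power `x ↦ x^(β/(β+1))`, giving the factor `n^(1/(β+1))`. With `uᵢ = dᵢ^(-1/(β+1))`
and `a = 1/(β+2)` one has `uᵢ^a vᵢ^(1-a) = dᵢ^(β/(β+1))`, so over the completed episodes the
sum is at most `V^(1/(β+2)) T^((β+1)/(β+2))`; the last episode adds at most `T^(β/(β+1))`.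
-/

open Finset Real

theorem sum_rpow_mul_rpow_le_rpow_sum_mul_rpow_sum {ι : Type*} (s : Finset ι) {u v : ι → ℝ}
    (hu : ∀ i ∈ s, 0 ≤ u i) (hv : ∀ i ∈ s, 0 ≤ v i) {a : ℝ} (ha₀ : 0 < a) (ha₁ : a < 1) :
    ∑ i ∈ s, u i ^ a * v i ^ (1 - a) ≤ (∑ i ∈ s, u i) ^ a * (∑ i ∈ s, v i) ^ (1 - a) := by
  have hb₀ : 1 - a ≠ 0 := by linarith
  have h := inner_le_Lp_mul_Lq_of_nonneg s (HolderConjugate.inv_one_sub_inv ha₀ ha₁)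
    (fun i hi => rpow_nonneg (hu i hi) a) (fun i hi => rpow_nonneg (hv i hi) (1 - a))
  simp only [one_div, inv_inv] at h
  rwa [sum_congr rfl fun i hi => rpow_rpow_inv (hu i hi) ha₀.ne',
    sum_congr rfl fun i hi => rpow_rpow_inv (hv i hi) hb₀] at h

theorem sum_rpow_le_card_rpow_mul_rpow {ι : Type*} (s : Finset ι) {x : ι → ℝ}
    (hx : ∀ i ∈ s, 0 ≤ x i) {β S : ℝ} (hβ : 0 < β) (hS : ∑ i ∈ s, x i ≤ S) :
    ∑ i ∈ s, x i ^ (β / (β + 1)) ≤ (#s : ℝ) ^ (1 / (β + 1)) * S ^ (β / (β + 1)) := by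
  have hexp : 1 - 1 / (β + 1) = β / (β + 1) := by field_simp; ring
  have h := sum_rpow_mul_rpow_le_rpow_sum_mul_rpow_sum s (fun _ _ => zero_le_one) hx
    (a := 1 / (β + 1)) (by positivity) (by rw [div_lt_one (by positivity)]; linarith)
  simp only [one_rpow, one_mul, sum_const, nsmul_eq_mul, mul_one, hexp] at h
  exact h.trans (by gcongr; exact sum_nonneg hx)

theorem sum_rpow_le_rpow_mul_rpow_of_sum_rpow_neg_le {ι : Type*} (s : Finset ι) {x : ι → ℝ}
    (hx : ∀ i ∈ s, 0 < x i) {β W S : ℝ} (hβ : 0 < β + 1)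
    (hW : ∑ i ∈ s, x i ^ (-(1 / (β + 1))) ≤ W) (hS : ∑ i ∈ s, x i ≤ S) :
    ∑ i ∈ s, x i ^ (β / (β + 1)) ≤ W ^ (1 / (β + 2)) * S ^ ((β + 1) / (β + 2)) := by
  have hβ₂ : 0 < β + 2 := by linarith
  have hexp : 1 - 1 / (β + 2) = (β + 1) / (β + 2) := by field_simp; ring
  have hu : ∀ i ∈ s, 0 ≤ x i ^ (-(1 / (β + 1))) := fun i hi => rpow_nonneg (hx i hi).le _
  have hv : ∀ i ∈ s, 0 ≤ x i := fun i hi => (hx i hi).le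
  have h := sum_rpow_mul_rpow_le_rpow_sum_mul_rpow_sum s hu hv
    (a := 1 / (β + 2)) (by positivity) (by rw [div_lt_one hβ₂]; linarith)
  rw [hexp] at h
  have hterm : ∀ i ∈ s, x i ^ (β / (β + 1)) =
      (x i ^ (-(1 / (β + 1)))) ^ (1 / (β + 2)) * x i ^ ((β + 1) / (β + 2)) := fun i hi => by
    rw [← rpow_mul (hx i hi).le, ← rpow_add (hx i hi)]
    congr 1
    field_simp
    ring
  rw [sum_congr rfl hterm]
  refine h.trans (mul_le_mul ?_ ?_ (rpow_nonneg (sum_nonneg hv) _)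
    (rpow_nonneg ((sum_nonneg hu).trans hW) _))
  · exact rpow_le_rpow (sum_nonneg hu) hW (by positivity)
  · exact rpow_le_rpow (sum_nonneg hv) hS (by positivity)

theorem sum_filter_not_succ_lt_le {n : ℕ} {f : Fin n → ℝ} {M : ℝ} (hM : 0 ≤ M)
    (hf : ∀ i, f i ≤ M) :
    ∑ i ∈ univ.filter (fun i : Fin n => ¬(i : ℕ) + 1 < n), f i ≤ M := by
  have hcard : #(univ.filter (fun i : Fin n => ¬(i : ℕ) + 1 < n)) ≤ 1 := by
    refine card_le_one.2 fun a ha b hb => ?_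
    simp only [mem_filter, mem_univ, true_and] at ha hb
    exact Fin.ext (by omega)
  calc _ ≤ #(univ.filter (fun i : Fin n => ¬(i : ℕ) + 1 < n)) • M :=
        sum_le_card_nsmul _ _ _ fun i _ => hf i
    _ ≤ M := by
        rw [nsmul_eq_mul]
        exact mul_le_of_le_one_left hM (by exact_mod_cast hcard)

theorem episodes_to_nonstationarity_general (β T L : ℝ) (n : ℕ) (d : Fin n → ℝ) (V : ℝ)
    (hβ : 1 ≤ β) (hL1 : 1 ≤ L)
    (hd : ∀ i, 0 < d i) (hsum : ∑ i, d i ≤ T)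
    (hvar : ∑ i ∈ Finset.univ.filter (fun i : Fin n => (i : ℕ) + 1 < n),
        L ^ 3 * d i ^ (-(1 / (β + 1))) ≤ V) :
    ∑ i, d i ^ (β / (β + 1)) * L ^ 3 ≤
      min ((n : ℝ) ^ (1 / (β + 1)) * T ^ (β / (β + 1)) * L ^ 3)
        (V ^ (1 / (β + 2)) * T ^ ((β + 1) / (β + 2)) * L ^ 3 + T ^ (β / (β + 1)) * L ^ 3) := by
  set early := univ.filter (fun i : Fin n => (i : ℕ) + 1 < n)
  have hL3 : 1 ≤ L ^ 3 := one_le_pow₀ hL1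
  have hL3_nonneg : 0 ≤ L ^ 3 := zero_le_one.trans hL3
  have hT : 0 ≤ T := (sum_nonneg fun i _ => (hd i).le).trans hsum
  have hd_le : ∀ i, d i ≤ T := fun i =>
    (single_le_sum (fun j _ => (hd j).le) (mem_univ i)).trans hsum
  have hearly_sum : ∑ i ∈ early, d i ≤ T :=
    (sum_le_sum_of_subset_of_nonneg (filter_subset _ _) fun i _ _ => (hd i).le).trans hsum
  have hearly_var : ∑ i ∈ early, d i ^ (-(1 / (β + 1))) ≤ V :=
    (sum_le_sum fun i _ => le_mul_of_one_le_left (rpow_nonneg (hd i).le _) hL3).trans hvar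
  rw [← sum_mul]
  refine le_min (mul_le_mul_of_nonneg_right ?_ hL3_nonneg) ?_
  · simpa using sum_rpow_le_card_rpow_mul_rpow univ (fun i _ => (hd i).le) (by linarith) hsum
  rw [← sum_filter_add_sum_filter_not univ (fun i : Fin n => (i : ℕ) + 1 < n), add_mul]
  refine add_le_add (mul_le_mul_of_nonneg_right ?_ hL3_nonneg)
    (mul_le_mul_of_nonneg_right ?_ hL3_nonneg)
  · exact sum_rpow_le_rpow_mul_rpow_of_sum_rpow_neg_le early (fun i _ => hd i) (by linarith)
      hearly_var hearly_sum
  · exact sum_filter_not_succ_lt_le (rpow_nonneg hT _) fun i =>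
      rpow_le_rpow (hd i).le (hd_le i) (by positivity)

/-- Relating episode lengths to non-stationarity measures: if `Σ dℓ ≤ T` and the variation
budget `V` dominates `Σ_{ℓ<n} L³·dℓ^{−1/(β+1)}`, then
`Σ dℓ^{β/(β+1)}·L³ ≤ min( n^{1/(β+1)}·T^{β/(β+1)}·L³ , V^{1/(β+2)}·T^{(β+1)/(β+2)}·L³ + T^{β/(β+1)}·L³ )`. -/
theorem episodes_to_nonstationarity (β T L : ℝ) (n : ℕ) (d : Fin n → ℝ) (V : ℝ)
    (hβ : 1 ≤ β) (hT : 2 ≤ T) (hL : L = Real.logb 2 T) (hL1 : 1 ≤ L)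
    (hd : ∀ i, 0 < d i) (hsum : ∑ i, d i ≤ T) (hV0 : 0 ≤ V)
    (hvar : ∑ i ∈ Finset.univ.filter (fun i : Fin n => (i : ℕ) + 1 < n),
        L ^ 3 * d i ^ (-(1 / (β + 1))) ≤ V) :
    ∑ i, d i ^ (β / (β + 1)) * L ^ 3 ≤
      min ((n : ℝ) ^ (1 / (β + 1)) * T ^ (β / (β + 1)) * L ^ 3)
        (V ^ (1 / (β + 2)) * T ^ ((β + 1) / (β + 2)) * L ^ 3 + T ^ (β / (β + 1)) * L ^ 3) :=
  episodes_to_nonstationarity_general β T L n d V hβ hL1 hd hsum hvar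
end

section
/- Let β ≥ 1 and let L ≥ 1 be a real number. Let d ≥ 1 be a real number and m a natural number with 2^m ≥ d and d^{1/(β+1)} ≥ 84·L³. Let δ₀ ∈ [0,1] satisfy δ₀ ≤ L³ / 2^{m/(β+1)}, set α := L³ / d^{1/(β+1)}, and set J := ⌈ max( 1 , (1/β)·log₂( d^{β/(β+1)} / (42^β · L^{3β}) ) ) ⌉. Then 2^{−(J+2)} − δ₀ > 4·α. -/
/-- Every gap exceeding `4α` is covered by the dyadic grid of depth `J`:
`2^{−(J+2)} − δ₀ > 4α`. -/
theorem dyadic_grid_covers (β L d : ℝ) (m : ℕ) (δ₀ α : ℝ) (J : ℤ)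
    (hβ : 1 ≤ β) (hL : 1 ≤ L) (hd1 : 1 ≤ d) (hdm : d ≤ (2 : ℝ) ^ m)
    (hdbig : 84 * L ^ 3 ≤ d ^ (1 / (β + 1)))
    (hδ0 : 0 ≤ δ₀) (hδ1 : δ₀ ≤ 1) (hδ : δ₀ ≤ L ^ 3 / (2 : ℝ) ^ ((m : ℝ) / (β + 1)))
    (hα : α = L ^ 3 / d ^ (1 / (β + 1)))
    (hJ : J = ⌈max 1 ((1 / β) * Real.logb 2 (d ^ (β / (β + 1)) / ((42 : ℝ) ^ β * L ^ (3 * β))))⌉) :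
    4 * α < (2 : ℝ) ^ (-((J : ℝ) + 2)) - δ₀ := by
  have hβ0 : (0:ℝ) < β := by linarith
  have hβ1 : (0:ℝ) < β + 1 := by linarith
  have hL0 : (0:ℝ) < L := by linarith
  have hL3 : (0:ℝ) < L ^ 3 := by positivity
  have hd0 : (0:ℝ) < d := by linarith
  set x := d ^ (1 / (β + 1)) with hx
  have hx0 : (0:ℝ) < x := Real.rpow_pos_of_pos hd0 _
  have hα0 : 0 < α := by rw [hα]; positivity
  set u := x / (42 * L ^ 3) with hu
  have hu2 : (2:ℝ) ≤ u := by
    rw [hu, le_div_iff₀ (by positivity)]; linarith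
  have hu0 : (0:ℝ) < u := by linarith
  -- identify the argument of logb as u ^ β
  have harg : d ^ (β / (β + 1)) / ((42 : ℝ) ^ β * L ^ (3 * β)) = u ^ β := by
    have h1 : d ^ (β / (β + 1)) = x ^ β := by
      rw [hx, ← Real.rpow_mul hd0.le]
      congr 1
      ring
    have h2 : ((42 : ℝ) ^ β * L ^ (3 * β)) = (42 * L ^ 3) ^ β := by
      rw [Real.mul_rpow (by norm_num) (by positivity)]
      congr 1
      rw [← Real.rpow_natCast L 3, ← Real.rpow_mul hL0.le]
      norm_num
    rw [h1, h2, hu, Real.div_rpow hx0.le (by positivity)]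
  have hlogpow : Real.logb 2 (u ^ β) = β * Real.logb 2 u := by
    simp [Real.logb, Real.log_rpow hu0, mul_div_assoc]
  have hlog1 : 1 ≤ Real.logb 2 u := by
    rw [show (1:ℝ) = Real.logb 2 2 by simp]
    exact Real.logb_le_logb_of_le (by norm_num) (by norm_num) hu2
  have hJval : J = ⌈Real.logb 2 u⌉ := by
    rw [hJ, harg, hlogpow]
    have : (1 / β) * (β * Real.logb 2 u) = Real.logb 2 u := by
      field_simp
    rw [this, max_eq_right hlog1]
  -- bound on J
  have hJlt : (J : ℝ) < Real.logb 2 u + 1 := by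
    rw [hJval]; exact Int.ceil_lt_add_one _
  have hexp : -(Real.logb 2 u + 3) < -((J : ℝ) + 2) := by linarith
  have hpow : (2:ℝ) ^ (-(Real.logb 2 u + 3)) < (2:ℝ) ^ (-((J : ℝ) + 2)) :=
    Real.rpow_lt_rpow_left_iff (by norm_num) |>.mpr hexp
  have hval : (2:ℝ) ^ (-(Real.logb 2 u + 3)) = 1 / (8 * u) := by
    rw [show -(Real.logb 2 u + 3) = (-Real.logb 2 u) + (-3) by ring,
      Real.rpow_add (by norm_num), Real.rpow_neg (by norm_num),
      Real.rpow_logb (by norm_num) (by norm_num) hu0]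
    rw [show ((-3:ℝ)) = ((-3 : ℤ) : ℝ) by norm_num, Real.rpow_intCast]
    field_simp
    norm_num [mul_comm]
  have hkey : 1 / (8 * u) = (42 / 8) * α := by
    rw [hu, hα]
    field_simp
  -- δ₀ ≤ α
  have hxle : x ≤ (2:ℝ) ^ ((m : ℝ) / (β + 1)) := by
    have h2m : ((2:ℝ) ^ m) ^ (1 / (β + 1)) = (2:ℝ) ^ ((m : ℝ) / (β + 1)) := by
      rw [← Real.rpow_natCast 2 m, ← Real.rpow_mul (by norm_num)]
      ring_nf
    calc x ≤ ((2:ℝ) ^ m) ^ (1 / (β + 1)) :=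
          Real.rpow_le_rpow hd0.le hdm (by positivity)
      _ = _ := h2m
  have h2m0 : (0:ℝ) < (2:ℝ) ^ ((m : ℝ) / (β + 1)) := Real.rpow_pos_of_pos (by norm_num) _
  have hδα : δ₀ ≤ α := by
    rw [hα]
    calc δ₀ ≤ L ^ 3 / (2:ℝ) ^ ((m : ℝ) / (β + 1)) := hδ
      _ ≤ L ^ 3 / x := by
          apply div_le_div_of_nonneg_left hL3.le hx0 hxle
  have h525 : (42 / 8) * α < (2:ℝ) ^ (-((J : ℝ) + 2)) := by
    rw [← hkey, ← hval]; exact hpow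
  linarith
end
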